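/- Let D be a random variable whose conditional mean given Z = z is z(1 + λz/2) and whose conditional variance given Z = z is (λ/3) z^3, where Z is exponentially distributed with mean z̄ = 1/μ > 0 and λ ≥ 0. Then Var(D) = z̄^2 + 6 λ z̄^3 + 5 λ^2 z̄^4. -/

import Mathlib

/-!
By the law of total variance, `Var D = 𝔼[Var(D | Z)] + Var(𝔼[D | Z])`. With the given
conditional moments both terms are polynomial moments of `Z`, and the moments of the
exponential law of mean `z̄` are `𝔼[Z ^ n] = n! z̄ ^ n`, the case `a = 1` of
`∫ x ^ n d Gamma(a, r) = Γ(a + n) / (Γ(a) r ^ n)`.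
-/

open MeasureTheory ProbabilityTheory Real Set

namespace ProbabilityTheory

-- Only a.e.: at `x = 0` the two sides differ when `a = 1` and `n = 0`.
lemma gammaPDFReal_mul_pow_ae_eq (a r : ℝ) (n : ℕ) :
    (fun x => gammaPDFReal a r x * x ^ n) =ᵐ[volume]
      (Ioi 0).indicator fun x => r ^ a / Gamma a * (x ^ (a + n - 1) * exp (-(r * x))) := by
  filter_upwards [Measure.ae_ne volume 0] with x hx0
  rcases hx0.lt_or_gt with hx | hx
  · simp [gammaPDFReal, hx.not_ge, hx.not_gt]
  · rw [indicator_of_mem (show x ∈ Ioi 0 from hx), gammaPDFReal, if_pos hx.le,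
      add_sub_right_comm, rpow_add hx, rpow_natCast]
    ring

lemma integrable_pow_gammaMeasure {a r : ℝ} (ha : 0 < a) (hr : 0 < r) (n : ℕ) :
    Integrable (fun x => x ^ n) (gammaMeasure a r) := by
  rw [gammaMeasure, integrable_withDensity_iff_integrable_smul' (f := gammaPDF a r)
    (measurable_gammaPDFReal a r).ennreal_ofReal (ae_of_all _ fun _ => ENNReal.ofReal_lt_top)]
  simp only [gammaPDF, ENNReal.toReal_ofReal (gammaPDFReal_nonneg ha hr _), smul_eq_mul]
  refine (integrable_congr (gammaPDFReal_mul_pow_ae_eq a r n)).mpr ?_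
  rw [integrable_indicator_iff measurableSet_Ioi]
  have hs : -1 < a + n - 1 := by have : (0 : ℝ) ≤ n := n.cast_nonneg; linarith
  refine IntegrableOn.congr_fun
    ((integrableOn_rpow_mul_exp_neg_mul_rpow hs one_pos hr).const_mul (r ^ a / Gamma a))
    (fun x _ => by simp only [rpow_one, neg_mul]) measurableSet_Ioi

lemma integral_pow_gammaMeasure {a r : ℝ} (ha : 0 < a) (hr : 0 < r) (n : ℕ) :
    ∫ x, x ^ n ∂gammaMeasure a r = Gamma (a + n) / (Gamma a * r ^ n) := by
  rw [gammaMeasure, integral_withDensity_eq_integral_toReal_smul (f := gammaPDF a r)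
    (measurable_gammaPDFReal a r).ennreal_ofReal (ae_of_all _ fun _ => ENNReal.ofReal_lt_top)]
  simp only [gammaPDF, ENNReal.toReal_ofReal (gammaPDFReal_nonneg ha hr _), smul_eq_mul]
  rw [integral_congr_ae (gammaPDFReal_mul_pow_ae_eq a r n), integral_indicator measurableSet_Ioi,
    integral_const_mul, integral_rpow_mul_exp_neg_mul_Ioi (by positivity) hr]
  have hΓ := (Gamma_pos_of_pos ha).ne'
  rw [div_rpow zero_le_one hr.le, one_rpow, rpow_add hr, rpow_natCast]
  field_simp

lemma integral_pow_expMeasure {r : ℝ} (hr : 0 < r) (n : ℕ) :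
    ∫ x, x ^ n ∂expMeasure r = n.factorial / r ^ n := by
  rw [expMeasure, integral_pow_gammaMeasure one_pos hr, add_comm, Gamma_nat_eq_factorial,
    Gamma_one, one_mul]

lemma integrable_pow_expMeasure {r : ℝ} (hr : 0 < r) (n : ℕ) :
    Integrable (fun x => x ^ n) (expMeasure r) :=
  integrable_pow_gammaMeasure one_pos hr n

lemma variance_add_mul_sq_expMeasure {r : ℝ} (hr : 0 < r) (c : ℝ) :
    Var[fun x => x + c * x ^ 2; expMeasure r]
      = 1 / r ^ 2 + 8 * c / r ^ 3 + 20 * c ^ 2 / r ^ 4 := by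
  have := isProbabilityMeasure_expMeasure hr
  have hint := integrable_pow_expMeasure hr
  have hmom := integral_pow_expMeasure hr
  have hint34 : Integrable (fun x : ℝ => 2 * c * x ^ 3 + c ^ 2 * x ^ 4) (expMeasure r) :=
    ((hint 3).const_mul _).add ((hint 4).const_mul _)
  have hsq : (fun x : ℝ => (x + c * x ^ 2) ^ 2)
      = fun x => x ^ 2 + (2 * c * x ^ 3 + c ^ 2 * x ^ 4) := by
    ext x; ring
  have hL2 : MemLp (fun x : ℝ => x + c * x ^ 2) 2 (expMeasure r) :=
    (memLp_two_iff_integrable_sq (by fun_prop)).mpr (hsq ▸ (hint 2).add hint34)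
  have hmean : ∫ x, x + c * x ^ 2 ∂expMeasure r = 1 / r + 2 * c / r ^ 2 := by
    have hint1 : Integrable (fun x : ℝ => x) (expMeasure r) := by simpa using hint 1
    have hmom1 : ∫ x, x ∂expMeasure r = 1 / r := by simpa using hmom 1
    rw [integral_add hint1 ((hint 2).const_mul _), integral_const_mul, hmom1, hmom 2]
    simp only [Nat.factorial]
    field_simp
    ring
  have hsecond : ∫ x, x ^ 2 + (2 * c * x ^ 3 + c ^ 2 * x ^ 4) ∂expMeasure r
      = 2 / r ^ 2 + 12 * c / r ^ 3 + 24 * c ^ 2 / r ^ 4 := by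
    rw [integral_add (hint 2) hint34, integral_add ((hint 3).const_mul _) ((hint 4).const_mul _),
      integral_const_mul, integral_const_mul, hmom 2, hmom 3, hmom 4]
    simp only [Nat.factorial]
    field_simp
    ring
  rw [variance_eq_sub hL2]
  simp only [Pi.pow_apply]
  rw [hsq, hsecond, hmean]
  field_simp
  ring

lemma variance_eq_integral_add_variance_of_condExp {Ω : Type*} {m m₀ : MeasurableSpace Ω}
    {μ : Measure[m₀] Ω} [IsProbabilityMeasure μ] (hm : m ≤ m₀) {X g v : Ω → ℝ}
    (hX : MemLp X 2 μ) (hg : μ[X | m] =ᵐ[μ] g) (hv : μ[fun ω => (X ω - g ω) ^ 2 | m] =ᵐ[μ] v) :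
    Var[X; μ] = ∫ ω, v ω ∂μ + Var[g; μ] := by
  have hcondVar : Var[X; μ | m] =ᵐ[μ] v := by
    refine (condExp_congr_ae ?_).trans hv
    filter_upwards [hg] with ω hω
    simp [hω]
  rw [← integral_condVar_add_variance_condExp hm hX, integral_congr_ae hcondVar, variance_congr hg]

end ProbabilityTheory

theorem var_agg_delay_general {Ω : Type*} [MeasureSpace Ω] [IsProbabilityMeasure (ℙ : Measure Ω)]
    (D Z : Ω → ℝ) (hZ : Measurable Z) (hD : MemLp D 2 ℙ)
    (zbar l : ℝ) (hzbar : 0 < zbar)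
    (hlaw : Measure.map Z ℙ = expMeasure (1 / zbar))
    (hcondMean : (ℙ : Measure Ω)[D | MeasurableSpace.comap Z Real.measurableSpace]
      =ᵐ[ℙ] fun ω => Z ω * (1 + l * Z ω / 2))
    (hcondVar : (ℙ : Measure Ω)[(fun ω => (D ω - Z ω * (1 + l * Z ω / 2)) ^ 2) |
        MeasurableSpace.comap Z Real.measurableSpace]
      =ᵐ[ℙ] fun ω => (l / 3) * (Z ω) ^ 3) :
    variance D ℙ = zbar ^ 2 + 6 * l * zbar ^ 3 + 5 * l ^ 2 * zbar ^ 4 := by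
  have hr : 0 < 1 / zbar := by positivity
  have hcondVar_integral : ∫ ω, l / 3 * Z ω ^ 3 = 2 * l * zbar ^ 3 := by
    rw [integral_const_mul, ← integral_map (f := fun x => x ^ 3) hZ.aemeasurable (by fun_prop),
      hlaw, integral_pow_expMeasure hr]
    simp only [Nat.factorial]
    field_simp
    ring
  have hcondMean_variance : Var[fun ω => Z ω * (1 + l * Z ω / 2); ℙ]
      = zbar ^ 2 + 4 * l * zbar ^ 3 + 5 * l ^ 2 * zbar ^ 4 := by
    have hg : (fun ω => Z ω * (1 + l * Z ω / 2)) = (fun x => x + l / 2 * x ^ 2) ∘ Z := by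
      ext ω; simp only [Function.comp_apply]; ring
    rw [hg, ← variance_map (by fun_prop) hZ.aemeasurable, hlaw, variance_add_mul_sq_expMeasure hr]
    field_simp
    ring
  rw [variance_eq_integral_add_variance_of_condExp hZ.comap_le hD hcondMean hcondVar,
    hcondVar_integral, hcondMean_variance]
  ring

/-- Aggregate delay, stochastic exponential fetch latency: if `Z ~ Exp(1/z̄)` with
`z̄ > 0`, `λ ≥ 0`, the conditional mean of `D` given `Z` is `Z(1 + λZ/2)` and the
conditional variance of `D` given `Z` is `(λ/3)Z^3`, then
`Var(D) = z̄^2 + 6λ z̄^3 + 5λ^2 z̄^4`. -/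
theorem var_agg_delay {Ω : Type*} [MeasureSpace Ω] [IsProbabilityMeasure (ℙ : Measure Ω)]
    (D Z : Ω → ℝ) (hZ : Measurable Z) (hD : MemLp D 2 ℙ)
    (zbar l : ℝ) (hzbar : 0 < zbar) (hl : 0 ≤ l)
    (hlaw : Measure.map Z ℙ = expMeasure (1 / zbar))
    (hcondMean : (ℙ : Measure Ω)[D | MeasurableSpace.comap Z Real.measurableSpace]
      =ᵐ[ℙ] fun ω => Z ω * (1 + l * Z ω / 2))
    (hcondVar : (ℙ : Measure Ω)[(fun ω => (D ω - Z ω * (1 + l * Z ω / 2)) ^ 2) |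
        MeasurableSpace.comap Z Real.measurableSpace]
      =ᵐ[ℙ] fun ω => (l / 3) * (Z ω) ^ 3) :
    variance D ℙ = zbar ^ 2 + 6 * l * zbar ^ 3 + 5 * l ^ 2 * zbar ^ 4 :=
  var_agg_delay_general D Z hZ hD zbar l hzbar hlaw hcondMean hcondVar
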